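/- For every nonnegative integer n, the degenerate exponential satisfies the multiplication-type identity e_λ^{mx}(t) coefficients: (mx)_{n,λ} = Σ_{k=0}^{n} C(n,k) (x)_{k,λ} (m-1)^{n-k} (x)_{n-k, λ/(m-1)} for integers m ≥ 2, which yields β_{n,λ}^{(p)}(mx) = Σ_{k=0}^{n} C(n,k) β_{k,λ}^{(p)}(x) (m-1)^{n-k} (x)_{n-k,λ/(m-1)}. -/

import Mathlib

open Finset PowerSeries

noncomputable section

/-- The generalized (degenerate) falling factorial `(x)_{n,λ} = ∏_{j<n} (x - jλ)`. -/
def dfall (x : ℝ) (n : ℕ) (lam : ℝ) : ℝ := ∏ j ∈ Finset.range n, (x - j * lam)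

/-- The degenerate exponential `e_λ^x(t) = Σ_{n≥0} (x)_{n,λ} t^n / n!` as a formal power series. -/
def degExp (lam x : ℝ) : PowerSeries ℝ :=
  PowerSeries.mk fun n => dfall x n lam / n.factorial

/-- The degenerate Stirling numbers of the second kind, defined by
`(1/k!)(e_λ(t)-1)^k = Σ_{n≥k} S_{2,λ}(n,k) t^n/n!`. -/
def S2 (lam : ℝ) (n k : ℕ) : ℝ :=
  (n.factorial : ℝ) / (k.factorial : ℝ) * PowerSeries.coeff n ((degExp lam 1 - 1) ^ k)

/-- The degenerate Stirling polynomials of the second kind, defined by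
`(1/k!)(e_λ(t)-1)^k e_λ^x(t) = Σ_{n≥k} S_{2,λ}(n,k|x) t^n/n!`. -/
def S2p (lam : ℝ) (n k : ℕ) (x : ℝ) : ℝ :=
  (n.factorial : ℝ) / (k.factorial : ℝ) *
    PowerSeries.coeff n ((degExp lam 1 - 1) ^ k * degExp lam x)

/-- The degenerate logarithm `log_λ(1+t) = Σ_{n≥1} λ^{n-1}(1)_{n,1/λ} t^n/n!`. -/
def degLog (lam : ℝ) : PowerSeries ℝ :=
  PowerSeries.mk fun n => if n = 0 then 0 else lam ^ (n - 1) * dfall 1 n (1 / lam) / n.factorial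

/-- The degenerate Stirling numbers of the first kind, defined by
`(1/k!)(log_λ(1+t))^k = Σ_{n≥k} S_{1,λ}(n,k) t^n/n!`. -/
def S1 (lam : ℝ) (n k : ℕ) : ℝ :=
  (n.factorial : ℝ) / (k.factorial : ℝ) * PowerSeries.coeff n ((degLog lam) ^ k)

/-- Rising factorial `⟨a⟩_k = a(a+1)⋯(a+k-1)`. -/
def rising (a : ℝ) (k : ℕ) : ℝ := ∏ j ∈ Finset.range k, (a + j)

/-- The generalized degenerate Bernoulli polynomials `β_{n,λ}^{(p)}(x)`, defined by
`Σ_{n≥0} β_{n,λ}^{(p)}(x) t^n/n! = ₂F₁(1-λ,1;p+2;1-e_λ(t)) e_λ^x(t)`.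
Since `1 - e_λ(t)` has zero constant term, the coefficient of `t^n` in the
hypergeometric series only involves the terms with `k ≤ n`. -/
def genBetaPoly (lam : ℝ) (p : ℤ) (x : ℝ) (n : ℕ) : ℝ :=
  (n.factorial : ℝ) * PowerSeries.coeff n
    ((∑ k ∈ Finset.range (n + 1),
        (rising (1 - lam) k * rising 1 k / (rising ((p : ℝ) + 2) k * k.factorial)) •
          ((1 - degExp lam 1) ^ k)) * degExp lam x)

/-- The generalized degenerate Bernoulli numbers `β_{n,λ}^{(p)} = β_{n,λ}^{(p)}(0)`. -/
def genBeta (lam : ℝ) (p : ℤ) (n : ℕ) : ℝ := genBetaPoly lam p 0 n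

/-- The degenerate type Eulerian numbers, defined by
`(-1)^{n-m} A_λ(n,m) = Σ_{k=0}^{n-m} λ^k (1)_{k+1,1/λ} C(n-k,m) S_{2,λ}(n,k)`. -/
def Eul (lam : ℝ) (n m : ℕ) : ℝ :=
  (-1 : ℝ) ^ (n - m) * ∑ k ∈ Finset.range (n - m + 1),
    lam ^ k * dfall 1 (k + 1) (1 / lam) * ((n - k).choose m : ℝ) * S2 lam n k


/-!
Writing `c x = x + (c - 1) x`, the Vandermonde convolution for `(·)_{n,λ}` together with the
scaling `(r y)_{j,λ} = r^j (y)_{j,λ/r}` gives the identity for `(c x)_{n,λ}`; on generating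
functions it reads `e_λ^{cx}(t) = e_λ^x(t) e_{λ/(c-1)}^x((c-1)t)`. Multiplying by the
hypergeometric factor and comparing coefficients of `t^n` gives the identity for `β`; the
truncation of that factor in `genBetaPoly` is harmless because `(1 - e_λ(t))^k` is divisible
by `t^k`.
-/

open scoped Nat

lemma dfall_succ (x : ℝ) (n : ℕ) (lam : ℝ) : dfall x (n + 1) lam = dfall x n lam * (x - n * lam) :=
  prod_range_succ _ _

lemma dfall_add (a b : ℝ) (n : ℕ) (lam : ℝ) :
    dfall (a + b) n lam =
      ∑ k ∈ range (n + 1), (n.choose k : ℝ) * dfall a k lam * dfall b (n - k) lam := by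
  induction n with
  | zero => simp [dfall]
  | succ n ih =>
    have hsplit : ∀ k ∈ range (n + 1),
        (n.choose k : ℝ) * dfall a k lam * dfall b (n - k) lam * (a + b - n * lam) =
          (n.choose k : ℝ) * (dfall a k lam * dfall b (n + 1 - k) lam) +
            (n.choose k : ℝ) * (dfall a (k + 1) lam * dfall b (n - k) lam) := by
      intro k hk
      have hkn : k ≤ n := Nat.lt_succ_iff.mp (mem_range.mp hk)
      rw [Nat.sub_add_comm hkn, dfall_succ, dfall_succ, Nat.cast_sub hkn]
      ring
    rw [dfall_succ, ih, sum_mul, sum_congr rfl hsplit, sum_add_distrib]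
    simp only [mul_assoc]
    exact (sum_choose_succ_mul (fun i j => dfall a i lam * dfall b j lam) n).symm

lemma dfall_mul_eq_pow_mul (r x : ℝ) (n : ℕ) (lam : ℝ) (hr : r ≠ 0) :
    dfall (r * x) n lam = r ^ n * dfall x n (lam / r) := by
  rw [dfall, dfall, show r ^ n = ∏ _j ∈ range n, r by simp, ← prod_mul_distrib]
  exact prod_congr rfl fun j _ => by field_simp

lemma dfall_mul_eq_sum (c x : ℝ) (n : ℕ) (lam : ℝ) (hc : c ≠ 1) :
    dfall (c * x) n lam =
      ∑ k ∈ range (n + 1),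
        (n.choose k : ℝ) * dfall x k lam * (c - 1) ^ (n - k) * dfall x (n - k) (lam / (c - 1)) := by
  rw [show c * x = x + (c - 1) * x by ring, dfall_add]
  refine sum_congr rfl fun k _ => ?_
  rw [dfall_mul_eq_pow_mul _ _ _ _ (sub_ne_zero.mpr hc)]
  ring

lemma factorial_mul_coeff_mul {R : Type*} [CommSemiring R] (f g : R⟦X⟧) (n : ℕ) :
    n ! * coeff n (f * g) =
      ∑ k ∈ range (n + 1), (n.choose k : R) * (k ! * coeff k f) * ((n - k)! * coeff (n - k) g) := by
  rw [coeff_mul, Nat.sum_antidiagonal_eq_sum_range_succ_mk, mul_sum]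
  refine sum_congr rfl fun k hk => ?_
  rw [← Nat.choose_mul_factorial_mul_factorial (Nat.lt_succ_iff.mp (mem_range.mp hk))]
  push_cast
  ring

lemma factorial_mul_coeff_degExp (lam x : ℝ) (n : ℕ) :
    n ! * coeff n (degExp lam x) = dfall x n lam := by
  rw [degExp, coeff_mk]
  field_simp

lemma constantCoeff_degExp (lam x : ℝ) : constantCoeff (degExp lam x) = 1 := by
  simp [degExp, ← coeff_zero_eq_constantCoeff_apply, dfall]

lemma factorial_mul_coeff_rescale_degExp (a lam x : ℝ) (n : ℕ) :
    n ! * coeff n (rescale a (degExp lam x)) = a ^ n * dfall x n lam := by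
  rw [coeff_rescale, mul_left_comm, factorial_mul_coeff_degExp]

theorem degExp_mul (lam c x : ℝ) (hc : c ≠ 1) :
    degExp lam (c * x) = degExp lam x * rescale (c - 1) (degExp (lam / (c - 1)) x) := by
  ext n
  refine mul_left_cancel₀ (Nat.cast_ne_zero.mpr n.factorial_ne_zero : (n ! : ℝ) ≠ 0) ?_
  rw [factorial_mul_coeff_mul, factorial_mul_coeff_degExp, dfall_mul_eq_sum c x n lam hc]
  refine sum_congr rfl fun k _ => ?_
  rw [factorial_mul_coeff_degExp, factorial_mul_coeff_rescale_degExp]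
  ring

lemma coeff_sum_smul_pow_mul_of_le {R : Type*} [CommSemiring R] {g : R⟦X⟧}
    (hg : constantCoeff g = 0) (a : ℕ → R) (f : R⟦X⟧) {k N : ℕ} (hkN : k ≤ N) :
    coeff k ((∑ j ∈ range (N + 1), a j • g ^ j) * f) =
      coeff k ((∑ j ∈ range (k + 1), a j • g ^ j) * f) := by
  have htail : X ^ (k + 1) ∣ ∑ j ∈ Ico (k + 1) (N + 1), a j • g ^ j := by
    refine dvd_sum fun j hj => ?_
    rw [smul_eq_C_mul]
    exact dvd_mul_of_dvd_right
      ((pow_dvd_pow X (mem_Ico.mp hj).1).trans (pow_dvd_pow_of_dvd (X_dvd_iff.mpr hg) j)) _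
  obtain ⟨q, hq⟩ := htail
  rw [← sum_range_add_sum_Ico _ (by omega : k + 1 ≤ N + 1), add_mul, map_add, hq, mul_assoc,
    X_pow_dvd_iff.mp (dvd_mul_right _ _) k (Nat.lt_succ_self k), add_zero]

def degHyp (lam : ℝ) (p : ℤ) (N : ℕ) : ℝ⟦X⟧ :=
  ∑ k ∈ range (N + 1),
    (rising (1 - lam) k * rising 1 k / (rising ((p : ℝ) + 2) k * k.factorial)) •
      ((1 - degExp lam 1) ^ k)

lemma genBetaPoly_eq (lam : ℝ) (p : ℤ) (y : ℝ) (n : ℕ) :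
    genBetaPoly lam p y n = n ! * coeff n (degHyp lam p n * degExp lam y) :=
  rfl

lemma factorial_mul_coeff_degHyp_mul_degExp (lam : ℝ) (p : ℤ) (y : ℝ) {k N : ℕ} (hkN : k ≤ N) :
    k ! * coeff k (degHyp lam p N * degExp lam y) = genBetaPoly lam p y k := by
  rw [genBetaPoly_eq, degHyp, degHyp,
    coeff_sum_smul_pow_mul_of_le (by simp [constantCoeff_degExp]) _ _ hkN]

theorem genBetaPoly_mul_eq_sum (lam : ℝ) (p : ℤ) (c x : ℝ) (n : ℕ) (hc : c ≠ 1) :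
    genBetaPoly lam p (c * x) n =
      ∑ k ∈ range (n + 1),
        (n.choose k : ℝ) * genBetaPoly lam p x k * (c - 1) ^ (n - k) *
          dfall x (n - k) (lam / (c - 1)) := by
  rw [genBetaPoly_eq, degExp_mul lam c x hc, ← mul_assoc, factorial_mul_coeff_mul]
  refine sum_congr rfl fun k hk => ?_
  rw [factorial_mul_coeff_degHyp_mul_degExp _ _ _ (Nat.lt_succ_iff.mp (mem_range.mp hk)),
    factorial_mul_coeff_rescale_degExp]
  ring

theorem stmt19_general (lam : ℝ) (p : ℤ) (x : ℝ) (n : ℕ) (m : ℕ) (hm : 2 ≤ m) :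
    dfall ((m : ℝ) * x) n lam =
      (∑ k ∈ Finset.range (n + 1),
        (n.choose k : ℝ) * dfall x k lam * ((m : ℝ) - 1) ^ (n - k) *
          dfall x (n - k) (lam / ((m : ℝ) - 1))) ∧
    genBetaPoly lam p ((m : ℝ) * x) n =
      ∑ k ∈ Finset.range (n + 1),
        (n.choose k : ℝ) * genBetaPoly lam p x k * ((m : ℝ) - 1) ^ (n - k) *
          dfall x (n - k) (lam / ((m : ℝ) - 1)) := by
  have hm1 : (m : ℝ) ≠ 1 := by exact_mod_cast (show m ≠ 1 by omega)
  exact ⟨dfall_mul_eq_sum _ _ _ _ hm1, genBetaPoly_mul_eq_sum _ _ _ _ _ hm1⟩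

theorem stmt19 (lam : ℝ) (p : ℤ) (hp : -1 ≤ p) (x : ℝ) (n : ℕ) (m : ℕ) (hm : 2 ≤ m) :
    dfall ((m : ℝ) * x) n lam =
      (∑ k ∈ Finset.range (n + 1),
        (n.choose k : ℝ) * dfall x k lam * ((m : ℝ) - 1) ^ (n - k) *
          dfall x (n - k) (lam / ((m : ℝ) - 1))) ∧
    genBetaPoly lam p ((m : ℝ) * x) n =
      ∑ k ∈ Finset.range (n + 1),
        (n.choose k : ℝ) * genBetaPoly lam p x k * ((m : ℝ) - 1) ^ (n - k) *
          dfall x (n - k) (lam / ((m : ℝ) - 1)) :=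
  stmt19_general lam p x n m hm
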